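/- arXiv:1512.03678 — 6 statements merged into one kernel-verified Lean document; each statement's English description precedes it below -/
import Mathlib

section
/- Let R be a commutative ring and α, β ∈ R, and for r ≥ 0 set a_r = ∑_{i=0}^{r} α^i β^{r-i}. Then in the formal power series ring R[[X]] one has the identity (1 − α²X)(1 − αβX)(1 − β²X) · ∑_{r≥0} a_r² X^r = 1 + αβX. -/
/-! The sequence `a` satisfies the Hecke recurrence `a (n + 2) = (α + β) a (n + 1) - αβ a n`,
whose solutions are (generically) combinations of `αⁿ` and `βⁿ`. Their squares are then
combinations of `α²ⁿ`, `(αβ)ⁿ` and `β²ⁿ`, so they satisfy the third-order recurrence with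
characteristic roots `α²`, `αβ`, `β²`, and this holds for every solution as a polynomial
identity in `α`, `β`, `a n`, `a (n + 1)`.
Multiplying the generating series of such a sequence by `(1 - α²X)(1 - αβX)(1 - β²X)` kills
every coefficient from `X³` on, and the three remaining ones are computed from
`a 0 = 1` and `a 1 = α + β`. -/

open PowerSeries

section

variable {R : Type*} [CommRing R]

theorem PowerSeries.cubic_mul_mk_of_recurrence {c₁ c₂ c₃ : R} {s : ℕ → R}
    (h : ∀ n, s (n + 3) = c₁ * s (n + 2) - c₂ * s (n + 1) + c₃ * s n) :
    (1 - C c₁ * X + C c₂ * X ^ 2 - C c₃ * X ^ 3) * mk s =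
      C (s 0) + C (s 1 - c₁ * s 0) * X + C (s 2 - c₁ * s 1 + c₂ * s 0) * X ^ 2 := by
  ext (_ | _ | _ | n) <;>
    simp [sub_mul, add_mul, mul_assoc, coeff_X_pow_mul', coeff_X_pow, h]
  all_goals ring

lemma sum_range_pow_mul_pow_add_two (α β : R) (n : ℕ) :
    ∑ i ∈ Finset.range (n + 3), α ^ i * β ^ (n + 2 - i) =
      (α + β) * ∑ i ∈ Finset.range (n + 2), α ^ i * β ^ (n + 1 - i)
        - α * β * ∑ i ∈ Finset.range (n + 1), α ^ i * β ^ (n - i) := by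
  have succ_eq (m : ℕ) : ∑ i ∈ Finset.range (m + 2), α ^ i * β ^ (m + 1 - i) =
      α ^ (m + 1) + β * ∑ i ∈ Finset.range (m + 1), α ^ i * β ^ (m - i) := by
    simpa using geom_sum₂_succ_eq α β (n := m + 1)
  rw [succ_eq (n + 1), succ_eq n]
  ring

lemma sq_add_three_eq_of_add_two_eq {α β : R} {a : ℕ → R}
    (h : ∀ n, a (n + 2) = (α + β) * a (n + 1) - α * β * a n) (n : ℕ) :
    a (n + 3) ^ 2 = (α ^ 2 + α * β + β ^ 2) * a (n + 2) ^ 2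
      - α * β * (α ^ 2 + α * β + β ^ 2) * a (n + 1) ^ 2 + α ^ 3 * β ^ 3 * a n ^ 2 := by
  rw [h (n + 1), h n]
  ring

end

/-- For a commutative ring `R` and `α β : R`, with
`a r = ∑_{i=0}^{r} α^i β^(r-i)`, we have in `R[[X]]`:
`(1 - α²X)(1 - αβX)(1 - β²X) · ∑_{r≥0} a_r² X^r = 1 + αβX`. -/
theorem symm_square_local_factor_squared_coeffs
    (R : Type*) [CommRing R] (α β : R)
    (a : ℕ → R) (ha : ∀ r : ℕ, a r = ∑ i ∈ Finset.range (r + 1), α ^ i * β ^ (r - i)) :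
    (1 - PowerSeries.C (α ^ 2) * PowerSeries.X) *
      (1 - PowerSeries.C (α * β) * PowerSeries.X) *
      (1 - PowerSeries.C (β ^ 2) * PowerSeries.X) *
      PowerSeries.mk (fun r => a r ^ 2) =
    1 + PowerSeries.C (α * β) * PowerSeries.X := by
  have hrec (n : ℕ) : a (n + 2) = (α + β) * a (n + 1) - α * β * a n := by
    simpa only [ha] using sum_range_pow_mul_pow_add_two α β n
  have ha₀ : a 0 = 1 := by simp [ha]
  have ha₁ : a 1 = α + β := by simp [ha, Finset.sum_range_succ, add_comm]
  calc _ = (1 - C (α ^ 2 + α * β + β ^ 2) * X + C (α * β * (α ^ 2 + α * β + β ^ 2)) * X ^ 2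
          - C (α ^ 3 * β ^ 3) * X ^ 3) * mk (fun r => a r ^ 2) := by
        congr 1
        simp only [map_add, map_mul, map_pow]
        ring
    _ = _ := cubic_mul_mk_of_recurrence (sq_add_three_eq_of_add_two_eq hrec)
    _ = C 1 + C (α * β) * X + C 0 * X ^ 2 := by
        rw [hrec 0, ha₀, ha₁]
        congr 4 <;> ring
    _ = _ := by simp
end

section
/- Let R be a commutative ring and α, β ∈ R, and for r ≥ 0 set a_r = ∑_{i=0}^{r} α^i β^{r-i}. Then in the formal power series ring R[[X]] one has the identity (∑_{m≥0} (αβ)^m X^m) · (∑_{r≥0} a_{2r} X^r) = ∑_{r≥0} a_r² X^r. (This is the local form of the paper's identity relating ∑ a_{n²}(f)χ(n)n^{−s} and ∑ a_n(f)²χ(n)n^{−s} via the Dirichlet L-factor L_N(χε, s−k+1).) -/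
/-!
Writing `h r = ∑_{i+j=r} α^i β^j`, splitting the sum defining `h (m + n + 1)` at `i = m` gives
`h (m + n + 1) = β^(n+1) h m + α^(m+1) h n`. Three instances of this yield
`h (r+1)^2 = h (2r+2) + αβ h r^2`, i.e. `(1 - αβX) ∑ h r^2 X^r = ∑ h (2r) X^r`, and
`∑ (αβ)^m X^m` is the inverse of `1 - αβX`.
-/

open Finset

namespace PowerSeries

variable {R : Type*} [CommRing R]

theorem mk_pow_mul_one_sub_C_mul_X (c : R) : mk (c ^ ·) * (1 - C c * X) = 1 := by
  simpa [rescale_mk, rescale_X] using congrArg (rescale c) (mk_one_mul_one_sub_eq_one R)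

theorem one_sub_C_mul_X_mul_mk {c : R} {u v : ℕ → R} (h0 : u 0 = v 0)
    (hsucc : ∀ n, u (n + 1) - c * u n = v (n + 1)) : (1 - C c * X) * mk u = mk v := by
  ext (_ | n) <;> simp [sub_mul, mul_assoc, coeff_succ_X_mul, h0, hsucc]

theorem mk_pow_mul_mk_eq_mk {c : R} {u v : ℕ → R} (h0 : u 0 = v 0)
    (hsucc : ∀ n, u (n + 1) - c * u n = v (n + 1)) : mk (c ^ ·) * mk v = mk u := by
  rw [← one_sub_C_mul_X_mul_mk h0 hsucc, ← mul_assoc, mk_pow_mul_one_sub_C_mul_X, one_mul]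

end PowerSeries

section CompleteHomogeneous

variable {R : Type*} [CommRing R] (α β : R)

def completeHomogeneous₂ (r : ℕ) : R := ∑ i ∈ range (r + 1), α ^ i * β ^ (r - i)

local notation "h" => completeHomogeneous₂ α β

theorem completeHomogeneous₂_zero : h 0 = 1 := by
  simp [completeHomogeneous₂]

theorem completeHomogeneous₂_add_add_one (m n : ℕ) :
    h (m + n + 1) = β ^ (n + 1) * h m + α ^ (m + 1) * h n := by
  simp only [completeHomogeneous₂]
  rw [show m + n + 1 + 1 = (m + 1) + (n + 1) by ring, sum_range_add, mul_sum, mul_sum]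
  congr 1
  · refine sum_congr rfl fun i hi => ?_
    rw [show m + n + 1 - i = (m - i) + (n + 1) by have := mem_range.1 hi; omega, pow_add]
    ring
  · refine sum_congr rfl fun i hi => ?_
    rw [show m + n + 1 - (m + 1 + i) = n - i by omega, pow_add]
    ring

theorem completeHomogeneous₂_succ_sq (r : ℕ) :
    h (r + 1) ^ 2 - α * β * h r ^ 2 = h (2 * (r + 1)) := by
  have hα := completeHomogeneous₂_add_add_one α β r 0
  have hβ := completeHomogeneous₂_add_add_one α β 0 r
  have hdouble := completeHomogeneous₂_add_add_one α β (r + 1) r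
  simp only [completeHomogeneous₂_zero, add_zero, zero_add, mul_one] at hα hβ
  rw [show 2 * (r + 1) = r + 1 + r + 1 by ring, hdouble]
  linear_combination h (r + 1) * hβ + α * h r * hα

end CompleteHomogeneous

/-- For a commutative ring `R` and `α β : R`, with
`a r = ∑_{i=0}^{r} α^i β^(r-i)`, we have in `R[[X]]`:
`(∑_{m≥0} (αβ)^m X^m) · (∑_{r≥0} a_{2r} X^r) = ∑_{r≥0} a_r² X^r`. -/
theorem even_coeffs_times_geometric_eq_squared_coeffs
    (R : Type*) [CommRing R] (α β : R)
    (a : ℕ → R) (ha : ∀ r : ℕ, a r = ∑ i ∈ Finset.range (r + 1), α ^ i * β ^ (r - i)) :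
    PowerSeries.mk (fun m => (α * β) ^ m) * PowerSeries.mk (fun r => a (2 * r)) =
      PowerSeries.mk (fun r => a r ^ 2) := by
  obtain rfl : a = completeHomogeneous₂ α β := funext ha
  exact PowerSeries.mk_pow_mul_mk_eq_mk (by simp [completeHomogeneous₂_zero])
    (completeHomogeneous₂_succ_sq α β)
end

section
/- For every s ∈ ℂ with Re(s) > k, the three series ∑_{m≥1} χ(m)ε(m) m^{k−1−s}, ∑_{n≥1} a(n²) χ(n) n^{−s}, and ∑_{n≥1} a(n)² χ(n) n^{−s} converge absolutely, and one has the identity (∑_{m≥1} χ(m)ε(m) m^{k−1−s}) · (∑_{n≥1} a(n²) χ(n) n^{−s}) = ∑_{n≥1} a(n)² χ(n) n^{−s}. -/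
/-!
Twisting by `χ` commutes with Dirichlet convolution, so the identity reduces to
`a(n)² = ∑_{d ∣ n} ε(d) d^{k-1} a((n/d)²)`. Both sides are multiplicative in `n`, and at `n = ℓ^r`
this is the Clebsch–Gordan identity `h_r² = ∑_{j ≤ r} (αβ)^j h_{2(r-j)}` for
`h_r = ∑_{i+j=r} α^i β^j`. Absolute convergence for `Re s > k` comes from
`|a(n)| ≤ d(n) n^{(k-1)/2}` and the divisor bound `d(n) = O(n^δ)`; the series of `a(n)² χ(n)` then
converges as the Dirichlet convolution of two absolutely convergent ones.
-/

open Finset ArithmeticFunction LSeries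

section CompleteHomogeneous

variable {R : Type*} [CommRing R]

/-- `h_r(x, y)`, the two-variable case of `MvPolynomial.hsymm`. -/
def hsymm₂ (x y : R) (r : ℕ) : R := ∑ i ∈ range (r + 1), x ^ i * y ^ (r - i)

@[simp] lemma hsymm₂_zero (x y : R) : hsymm₂ x y 0 = 1 := by simp [hsymm₂]

lemma hsymm₂_comm (x y : R) (r : ℕ) : hsymm₂ x y r = hsymm₂ y x r := by
  simpa [hsymm₂] using geom_sum₂_comm x y (r + 1)

lemma hsymm₂_succ (x y : R) (r : ℕ) : hsymm₂ x y (r + 1) = y * hsymm₂ x y r + x ^ (r + 1) := by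
  simpa [hsymm₂, add_comm] using geom_sum₂_succ_eq x y (n := r + 1)

lemma hsymm₂_add_add_one (x y : R) (a b : ℕ) :
    hsymm₂ x y (a + b + 1) = y ^ (b + 1) * hsymm₂ x y a + x ^ (a + 1) * hsymm₂ x y b := by
  induction b with
  | zero => simp [hsymm₂_succ]
  | succ b ih => rw [← add_assoc, hsymm₂_succ, ih, hsymm₂_succ]; ring

lemma hsymm₂_succ_sq (x y : R) (r : ℕ) :
    hsymm₂ x y (r + 1) ^ 2 = x * y * hsymm₂ x y r ^ 2 + hsymm₂ x y (2 * (r + 1)) := by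
  have h₁ := hsymm₂_succ x y r
  have h₂ : hsymm₂ x y (r + 1) = x * hsymm₂ x y r + y ^ (r + 1) := by
    rw [hsymm₂_comm, hsymm₂_succ, hsymm₂_comm]
  have h₃ := hsymm₂_add_add_one x y r (r + 1)
  rw [show r + (r + 1) + 1 = 2 * (r + 1) by ring] at h₃
  linear_combination
    (hsymm₂ x y (r + 1) - x ^ (r + 1)) * h₂ + (x * hsymm₂ x y r + y ^ (r + 1)) * h₁ - h₃

/-- The character of `Sym^r ⊗ Sym^r = ⊕_{j ≤ r} det^j ⊗ Sym^{2(r-j)}`. -/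
theorem sq_hsymm₂ (x y : R) (r : ℕ) :
    hsymm₂ x y r ^ 2 = ∑ j ∈ range (r + 1), (x * y) ^ j * hsymm₂ x y (2 * (r - j)) := by
  induction r with
  | zero => simp
  | succ r ih =>
    rw [hsymm₂_succ_sq, ih, sum_range_succ' _ (r + 1), mul_sum]
    simp only [Nat.add_sub_add_right, Nat.sub_zero, pow_zero, one_mul, pow_succ]
    congr 1
    exact sum_congr rfl fun j _ => by ring

theorem norm_hsymm₂_le {R : Type*} [SeminormedCommRing R] [NormOneClass R] {x y : R} {B : ℝ}
    (hx : ‖x‖ ≤ B) (hy : ‖y‖ ≤ B) (r : ℕ) : ‖hsymm₂ x y r‖ ≤ (r + 1) * B ^ r := by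
  have hB : 0 ≤ B := (norm_nonneg x).trans hx
  calc ‖hsymm₂ x y r‖ ≤ ∑ i ∈ range (r + 1), ‖x‖ ^ i * ‖y‖ ^ (r - i) :=
        (norm_sum_le _ _).trans <| sum_le_sum fun i _ => (norm_mul_le _ _).trans <|
          mul_le_mul (norm_pow_le _ _) (norm_pow_le _ _) (norm_nonneg _) (by positivity)
    _ ≤ ∑ i ∈ range (r + 1), B ^ i * B ^ (r - i) := by gcongr
    _ = (r + 1) * B ^ r := by
        rw [sum_congr rfl fun i hi => by
          rw [← pow_add, Nat.add_sub_cancel' (mem_range_succ_iff.1 hi)]]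
        simp

end CompleteHomogeneous

lemma exists_add_one_le_mul_pow {u : ℝ} (hu : 1 < u) :
    ∃ M, 1 ≤ M ∧ ∀ r : ℕ, (r : ℝ) + 1 ≤ M * u ^ r := by
  set M := max 1 (u - 1)⁻¹
  have hM : 1 ≤ M * (u - 1) := by
    calc (1 : ℝ) = (u - 1)⁻¹ * (u - 1) := (inv_mul_cancel₀ (by linarith)).symm
      _ ≤ M * (u - 1) := mul_le_mul_of_nonneg_right (le_max_right _ _) (by linarith)
  refine ⟨M, le_max_left _ _, fun r => ?_⟩
  have bernoulli : 1 + r * (u - 1) ≤ u ^ r := by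
    simpa using one_add_mul_le_pow (by linarith : (-2 : ℝ) ≤ u - 1) r
  nlinarith [le_max_left 1 (u - 1)⁻¹, (r.cast_nonneg : (0 : ℝ) ≤ r)]

/-- Prime powers `p^r` with `p ≥ 2^{1/δ}` contribute `r + 1 ≤ 2^r ≤ p^{rδ}`; each of the finitely
many smaller primes contributes at most a constant factor `M`. -/
theorem card_divisors_le_mul_rpow {δ : ℝ} (hδ : 0 < δ) :
    ∃ C, ∀ n : ℕ, n ≠ 0 → (#n.divisors : ℝ) ≤ C * (n : ℝ) ^ δ := by
  obtain ⟨M, hM1, hM⟩ := exists_add_one_le_mul_pow (Real.one_lt_rpow one_lt_two hδ)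
  set P := ⌈(2 : ℝ) ^ δ⁻¹⌉₊
  have hprime : ∀ p r : ℕ, p.Prime →
      (r : ℝ) + 1 ≤ (if p < P then M else 1) * ((p : ℝ) ^ δ) ^ r := by
    intro p r hp
    have hp2 : (2 : ℝ) ≤ p := by exact_mod_cast hp.two_le
    split_ifs with hpP
    · calc (r : ℝ) + 1 ≤ M * ((2 : ℝ) ^ δ) ^ r := hM r
        _ ≤ M * ((p : ℝ) ^ δ) ^ r := by gcongr
    · have h2p : (2 : ℝ) ≤ (p : ℝ) ^ δ := by
        calc (2 : ℝ) = ((2 : ℝ) ^ δ⁻¹) ^ δ := by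
              rw [← Real.rpow_mul zero_le_two, inv_mul_cancel₀ hδ.ne', Real.rpow_one]
          _ ≤ (p : ℝ) ^ δ := by
            gcongr
            exact (Nat.le_ceil _).trans (by exact_mod_cast not_lt.1 hpP)
      calc (r : ℝ) + 1 ≤ 2 ^ r := by exact_mod_cast Nat.lt_two_pow_self (n := r)
        _ ≤ 1 * ((p : ℝ) ^ δ) ^ r := by rw [one_mul]; gcongr
  refine ⟨M ^ P, fun n hn => ?_⟩
  calc (#n.divisors : ℝ) = ∏ p ∈ n.primeFactors, ((n.factorization p : ℝ) + 1) := by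
        rw [Nat.card_divisors hn]; push_cast; rfl
    _ ≤ ∏ p ∈ n.primeFactors, (if p < P then M else 1) * ((p : ℝ) ^ δ) ^ n.factorization p :=
        prod_le_prod (fun _ _ => by positivity) fun p hp =>
          hprime _ _ (Nat.prime_of_mem_primeFactors hp)
    _ = M ^ #{p ∈ n.primeFactors | p < P} * (n : ℝ) ^ δ := by
        rw [prod_mul_distrib, prod_ite, prod_const, prod_const_one, mul_one]
        congr 1
        conv_rhs => rw [← Nat.prod_factorization_pow_eq_self hn]
        rw [Finsupp.prod, Nat.cast_prod, ← Real.finsetProd_rpow _ _ fun _ _ => by positivity]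
        exact prod_congr rfl fun p _ => by push_cast; exact Real.rpow_pow_comm (by positivity) _ _
    _ ≤ M ^ P * n ^ δ := by
        gcongr
        exact (card_le_card fun p hp => mem_range.2 (mem_filter.1 hp).2).trans (card_range P).le

section Bounds

variable {R : Type*} [SeminormedCommRing R] [NormOneClass R]

theorem norm_le_card_divisors_mul_rpow {a α β : ℕ → R} {θ : ℝ}
    (haM : ∀ m n : ℕ, 0 < m → 0 < n → m.Coprime n → a (m * n) = a m * a n)
    (haP : ∀ p r : ℕ, p.Prime → a (p ^ r) = hsymm₂ (α p) (β p) r)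
    (hα : ∀ p : ℕ, p.Prime → ‖α p‖ ≤ (p : ℝ) ^ θ) (hβ : ∀ p : ℕ, p.Prime → ‖β p‖ ≤ (p : ℝ) ^ θ)
    {n : ℕ} (hn : n ≠ 0) : ‖a n‖ ≤ #n.divisors * (n : ℝ) ^ θ := by
  induction n using Nat.recOnPrimeCoprime with
  | zero => exact absurd rfl hn
  | prime_pow p r hp =>
    rw [haP p r hp, ← ArithmeticFunction.sigma_zero_apply,
      ArithmeticFunction.sigma_zero_apply_prime_pow hp, Nat.cast_pow,
      ← Real.rpow_pow_comm (by positivity)]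
    push_cast
    exact norm_hsymm₂_le (hα p hp) (hβ p hp) r
  | coprime m n hm hn' hmn ihm ihn =>
    rw [haM m n (by omega) (by omega) hmn, Nat.Coprime.card_divisors_mul hmn]
    push_cast
    rw [Real.mul_rpow (by positivity) (by positivity)]
    calc ‖a m * a n‖ ≤ ‖a m‖ * ‖a n‖ := norm_mul_le _ _
      _ ≤ (#m.divisors * (m : ℝ) ^ θ) * (#n.divisors * (n : ℝ) ^ θ) := by
        gcongr
        exacts [ihm (by omega), ihn (by omega)]
      _ = _ := by ring

theorem exists_norm_le_mul_rpow {a α β : ℕ → R} {θ δ : ℝ} (hδ : 0 < δ)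
    (haM : ∀ m n : ℕ, 0 < m → 0 < n → m.Coprime n → a (m * n) = a m * a n)
    (haP : ∀ p r : ℕ, p.Prime → a (p ^ r) = hsymm₂ (α p) (β p) r)
    (hα : ∀ p : ℕ, p.Prime → ‖α p‖ ≤ (p : ℝ) ^ θ) (hβ : ∀ p : ℕ, p.Prime → ‖β p‖ ≤ (p : ℝ) ^ θ) :
    ∃ C, ∀ n : ℕ, n ≠ 0 → ‖a n‖ ≤ C * (n : ℝ) ^ (θ + δ) := by
  obtain ⟨C, hC⟩ := card_divisors_le_mul_rpow hδ
  refine ⟨C, fun n hn => ?_⟩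
  calc ‖a n‖ ≤ #n.divisors * (n : ℝ) ^ θ := norm_le_card_divisors_mul_rpow haM haP hα hβ hn
    _ ≤ C * (n : ℝ) ^ δ * (n : ℝ) ^ θ := by gcongr; exact hC n hn
    _ = C * (n : ℝ) ^ (θ + δ) := by
      rw [Real.rpow_add (by positivity), mul_assoc, mul_comm ((n : ℝ) ^ θ)]

end Bounds

section Convolution

open scoped LSeries.notation

variable {R : Type*}

lemma toArithmeticFunction_apply [Zero R] {f : ℕ → R} {n : ℕ} (hn : n ≠ 0) :
    toArithmeticFunction f n = f n :=
  if_neg hn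

lemma isMultiplicative_toArithmeticFunction [MonoidWithZero R] {f : ℕ → R} (h1 : f 1 = 1)
    (hmul : ∀ m n : ℕ, 0 < m → 0 < n → m.Coprime n → f (m * n) = f m * f n) :
    (toArithmeticFunction f).IsMultiplicative := by
  refine IsMultiplicative.iff_ne_zero.2 ⟨by rwa [toArithmeticFunction_apply one_ne_zero], ?_⟩
  intro m n hm hn hmn
  simp only [toArithmeticFunction_apply, hm, hn, mul_ne_zero, ne_eq, not_false_eq_true]
  exact hmul m n (Nat.pos_of_ne_zero hm) (Nat.pos_of_ne_zero hn) hmn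

lemma convolution_apply_prime_pow [CommSemiring R] (f g : ℕ → R) {p : ℕ} (hp : p.Prime) (r : ℕ) :
    (f ⍟ g) (p ^ r) = ∑ j ∈ range (r + 1), f (p ^ j) * g (p ^ (r - j)) := by
  rw [convolution_def]
  dsimp only
  rw [Nat.sum_divisorsAntidiagonal (fun d e => f d * g e),
    Nat.sum_divisors_prime_pow hp]
  exact sum_congr rfl fun j hj => by rw [Nat.pow_div (mem_range_succ_iff.1 hj) hp.pos]

theorem sq_eq_convolution_apply_sq [CommRing R] {a ψ α β : ℕ → R} (ha1 : a 1 = 1)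
    (haM : ∀ m n : ℕ, 0 < m → 0 < n → m.Coprime n → a (m * n) = a m * a n)
    (haP : ∀ p r : ℕ, p.Prime → a (p ^ r) = hsymm₂ (α p) (β p) r)
    (hψ1 : ψ 1 = 1) (hψ : ∀ m n : ℕ, ψ (m * n) = ψ m * ψ n)
    (hαβ : ∀ p : ℕ, p.Prime → α p * β p = ψ p) {n : ℕ} (hn : n ≠ 0) :
    a n ^ 2 = (ψ ⍟ fun n => a (n ^ 2)) n := by
  have hψpow (p j : ℕ) : ψ (p ^ j) = ψ p ^ j := by
    induction j with
    | zero => simpa using hψ1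
    | succ j ih => rw [pow_succ, hψ, ih, pow_succ]
  have hsq : (toArithmeticFunction fun n => a n ^ 2).IsMultiplicative :=
    isMultiplicative_toArithmeticFunction (by rw [ha1, one_pow]) fun m n hm hn hmn => by
      rw [haM m n hm hn hmn, mul_pow]
  have hψ' : (toArithmeticFunction ψ).IsMultiplicative :=
    isMultiplicative_toArithmeticFunction hψ1 fun m n _ _ _ => hψ m n
  have hsq' : (toArithmeticFunction fun n => a (n ^ 2)).IsMultiplicative :=
    isMultiplicative_toArithmeticFunction (by rwa [one_pow]) fun m n hm hn hmn => by
      rw [mul_pow, haM _ _ (by positivity) (by positivity) (hmn.pow 2 2)]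
  suffices h : toArithmeticFunction (fun n => a n ^ 2) =
      toArithmeticFunction ψ * toArithmeticFunction fun n => a (n ^ 2) by
    rw [LSeries.convolution, ← h, toArithmeticFunction_apply hn]
  refine (IsMultiplicative.eq_iff_eq_on_prime_powers _ hsq _ (hψ'.mul hsq')).2 fun p r hp => ?_
  rw [toArithmeticFunction_apply (pow_ne_zero r hp.ne_zero)]
  change _ = (ψ ⍟ fun n => a (n ^ 2)) (p ^ r)
  rw [convolution_apply_prime_pow _ _ hp, haP p r hp, sq_hsymm₂]
  refine sum_congr rfl fun j _ => ?_
  rw [hψpow, ← hαβ p hp, ← pow_mul, mul_comm (r - j), haP p _ hp]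

theorem sq_mul_eq_convolution [CommRing R] {a α β : ℕ → R} (ha1 : a 1 = 1)
    (haM : ∀ m n : ℕ, 0 < m → 0 < n → m.Coprime n → a (m * n) = a m * a n)
    (haP : ∀ p r : ℕ, p.Prime → a (p ^ r) = hsymm₂ (α p) (β p) r)
    {N N' k : ℕ} (ε : DirichletCharacter R N) (χ : DirichletCharacter R N')
    (hαβ : ∀ p : ℕ, p.Prime → α p * β p = ε p * (p : R) ^ k) {n : ℕ} (hn : n ≠ 0) :
    a n ^ 2 * χ n = ((fun n => χ n * ε n * (n : R) ^ k) ⍟ fun n => a (n ^ 2) * χ n) n := by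
  have hψ : ∀ m n : ℕ, ε (m * n : ℕ) * ((m * n : ℕ) : R) ^ k =
      ε m * (m : R) ^ k * (ε n * (n : R) ^ k) := fun m n => by push_cast; rw [map_mul]; ring
  have hF : (fun n : ℕ => χ n * ε n * (n : R) ^ k) =
      (fun n : ℕ => χ n) * fun n : ℕ => ε n * (n : R) ^ k :=
    funext fun n => mul_assoc ..
  have hG : (fun n : ℕ => a (n ^ 2) * χ n) = (fun n : ℕ => χ n) * fun n => a (n ^ 2) :=
    funext fun n => mul_comm ..
  rw [hF, hG, DirichletCharacter.mul_convolution_distrib, Pi.mul_apply,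
    ← sq_eq_convolution_apply_sq ha1 haM haP (by simp) hψ hαβ hn, mul_comm]

end Convolution

section Summability

lemma LSeriesSummable_mul_pow {c : ℕ → ℂ} (hc : ∀ n, ‖c n‖ ≤ 1) {m : ℕ} {s : ℂ}
    (hs : (m : ℝ) + 1 < s.re) : LSeriesSummable (fun n => c n * (n : ℂ) ^ m) s :=
  LSeriesSummable_of_le_const_mul_rpow hs ⟨1, fun n _ => by
    rw [norm_mul, norm_pow, Complex.norm_natCast, add_sub_cancel_right, Real.rpow_natCast, one_mul]
    exact mul_le_of_le_one_left (by positivity) (hc n)⟩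

lemma LSeriesSummable_apply_sq_mul {a α β : ℕ → ℂ} {θ : ℝ}
    (haM : ∀ m n : ℕ, 0 < m → 0 < n → m.Coprime n → a (m * n) = a m * a n)
    (haP : ∀ p r : ℕ, p.Prime → a (p ^ r) = hsymm₂ (α p) (β p) r)
    (hα : ∀ p : ℕ, p.Prime → ‖α p‖ ≤ (p : ℝ) ^ θ) (hβ : ∀ p : ℕ, p.Prime → ‖β p‖ ≤ (p : ℝ) ^ θ)
    {c : ℕ → ℂ} (hc : ∀ n, ‖c n‖ ≤ 1) {s : ℂ} (hs : 2 * θ + 1 < s.re) :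
    LSeriesSummable (fun n => a (n ^ 2) * c n) s := by
  set δ := (s.re - (2 * θ + 1)) / 4
  obtain ⟨C, hC⟩ := exists_norm_le_mul_rpow (δ := δ) (by simp only [δ]; linarith) haM haP hα hβ
  refine LSeriesSummable_of_le_const_mul_rpow (x := 2 * (θ + δ) + 1) (by simp only [δ]; linarith)
    ⟨C, fun n hn => ?_⟩
  calc ‖a (n ^ 2) * c n‖ ≤ ‖a (n ^ 2)‖ := by
        rw [norm_mul]; exact mul_le_of_le_one_right (norm_nonneg _) (hc n)
    _ ≤ C * ((n ^ 2 : ℕ) : ℝ) ^ (θ + δ) := hC _ (pow_ne_zero 2 hn)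
    _ = C * (n : ℝ) ^ (2 * (θ + δ) + 1 - 1) := by
        rw [add_sub_cancel_right, Nat.cast_pow, ← Real.rpow_natCast_mul (by positivity)]
        norm_num

lemma term_pnat (f : ℕ → ℂ) (s : ℂ) (n : ℕ+) : term f s n = f n * (n : ℂ) ^ (-s) := by
  rw [term_of_ne_zero n.ne_zero, Complex.cpow_neg, div_eq_mul_inv]

lemma tsum_pnat_eq_LSeries {f : ℕ → ℂ} {g : ℕ+ → ℂ} {s : ℂ}
    (hg : ∀ n : ℕ+, g n = f n * (n : ℂ) ^ (-s)) : ∑' n, g n = LSeries f s := by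
  rw [LSeries, ← tsum_pnat_eq_tsum_of_eq_zero (term_zero f s)]
  exact tsum_congr fun n => by rw [hg, term_pnat]

lemma LSeriesSummable.summable_norm_pnat {f : ℕ → ℂ} {g : ℕ+ → ℂ} {s : ℂ}
    (hf : LSeriesSummable f s) (hg : ∀ n : ℕ+, g n = f n * (n : ℂ) ^ (-s)) :
    Summable fun n => ‖g n‖ :=
  (hf.norm.comp_injective PNat.coe_injective).congr fun n => by
    simp only [Function.comp, term_pnat, hg]

end Summability

/-- With `a` the multiplicative function with Hecke-type values at prime
powers and Dirichlet characters `ε`, `χ`, for `Re(s) > k` the three Dirichlet series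
converge absolutely and
`(∑_{m≥1} χ(m)ε(m) m^{k−1−s}) · (∑_{n≥1} a(n²)χ(n) n^{−s}) = ∑_{n≥1} a(n)²χ(n) n^{−s}`. -/
theorem symm_square_dirichlet_series_identity
    (k : ℕ) (hk : 1 ≤ k)
    (α β : ℕ → ℂ)
    (hα : ∀ ℓ : ℕ, ℓ.Prime → ‖α ℓ‖ ≤ (ℓ : ℝ) ^ (((k : ℝ) - 1) / 2))
    (hβ : ∀ ℓ : ℕ, ℓ.Prime → ‖β ℓ‖ ≤ (ℓ : ℝ) ^ (((k : ℝ) - 1) / 2))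
    (a : ℕ → ℂ) (ha1 : a 1 = 1)
    (haP : ∀ ℓ : ℕ, ℓ.Prime → ∀ r : ℕ, 1 ≤ r →
      a (ℓ ^ r) = ∑ i ∈ Finset.range (r + 1), α ℓ ^ i * β ℓ ^ (r - i))
    (haM : ∀ m n : ℕ, 0 < m → 0 < n → Nat.Coprime m n → a (m * n) = a m * a n)
    (Nf Nχ : ℕ) (ε : DirichletCharacter ℂ Nf) (χ : DirichletCharacter ℂ Nχ)
    (hαβ : ∀ ℓ : ℕ, ℓ.Prime → α ℓ * β ℓ = ε (ℓ : ZMod Nf) * (ℓ : ℂ) ^ (k - 1))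
    (s : ℂ) (hs : (k : ℝ) < s.re) :
    Summable (fun m : ℕ+ =>
      ‖χ ((m : ℕ) : ZMod Nχ) * ε ((m : ℕ) : ZMod Nf) *
        ((m : ℕ) : ℂ) ^ ((k : ℂ) - 1 - s)‖) ∧
    Summable (fun n : ℕ+ =>
      ‖a ((n : ℕ) ^ 2) * χ ((n : ℕ) : ZMod Nχ) * ((n : ℕ) : ℂ) ^ (-s)‖) ∧
    Summable (fun n : ℕ+ =>
      ‖a (n : ℕ) ^ 2 * χ ((n : ℕ) : ZMod Nχ) * ((n : ℕ) : ℂ) ^ (-s)‖) ∧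
    (∑' m : ℕ+, χ ((m : ℕ) : ZMod Nχ) * ε ((m : ℕ) : ZMod Nf) *
        ((m : ℕ) : ℂ) ^ ((k : ℂ) - 1 - s)) *
      (∑' n : ℕ+, a ((n : ℕ) ^ 2) * χ ((n : ℕ) : ZMod Nχ) * ((n : ℕ) : ℂ) ^ (-s)) =
    ∑' n : ℕ+, a (n : ℕ) ^ 2 * χ ((n : ℕ) : ZMod Nχ) * ((n : ℕ) : ℂ) ^ (-s) := by
  have haP' : ∀ p r : ℕ, p.Prime → a (p ^ r) = hsymm₂ (α p) (β p) r := fun p r hp => by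
    rcases Nat.eq_zero_or_pos r with rfl | hr
    · simpa using ha1
    · exact haP p hp r hr
  set F : ℕ → ℂ := fun n => χ n * ε n * (n : ℂ) ^ (k - 1)
  set G : ℕ → ℂ := fun n => a (n ^ 2) * χ n
  have hconv {n : ℕ} (hn : n ≠ 0) := sq_mul_eq_convolution ha1 haM haP' ε χ hαβ hn
  have hF : LSeriesSummable F s := LSeriesSummable_mul_pow
    (fun n => by simpa using mul_le_one₀ (χ.norm_le_one n) (norm_nonneg _) (ε.norm_le_one n))
    (by rw [Nat.cast_sub hk]; push_cast; linarith)
  have hG : LSeriesSummable G s :=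
    LSeriesSummable_apply_sq_mul haM haP' hα hβ (χ.norm_le_one ·) (by linarith)
  have hH : LSeriesSummable (fun n => a n ^ 2 * χ n) s :=
    (LSeriesSummable_congr s hconv).2 (hF.convolution hG)
  have hFterm (m : ℕ+) : χ m * ε m * (m : ℂ) ^ ((k : ℂ) - 1 - s) = F m * (m : ℂ) ^ (-s) := by
    rw [mul_assoc (χ m * ε m), ← Complex.cpow_natCast, ← Complex.cpow_add _ _ (by simp),
      Nat.cast_sub hk]
    push_cast
    ring_nf
  refine ⟨hF.summable_norm_pnat hFterm, hG.summable_norm_pnat fun _ => rfl,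
    hH.summable_norm_pnat fun _ => rfl, ?_⟩
  rw [tsum_pnat_eq_LSeries hFterm, tsum_pnat_eq_LSeries (f := G) fun _ => rfl,
    tsum_pnat_eq_LSeries (f := fun n => a n ^ 2 * χ n) fun _ => rfl, LSeries_congr hconv,
    LSeries_convolution' hF hG]
end

section
/- Let p ≥ 7 be a prime. Then the first group cohomology H¹(SL₂(𝔽_p), sl₂(𝔽_p)) vanishes, where sl₂(𝔽_p) is the 3-dimensional 𝔽_p-vector space of 2×2 trace-zero matrices over 𝔽_p, equipped with the SL₂(𝔽_p)-action by conjugation g • A = g A g⁻¹. -/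
open Matrix

/-- The 3-dimensional `𝔽_p`-vector space `sl₂(𝔽_p)` of trace-zero `2 × 2` matrices. -/
noncomputable def sl2 (p : ℕ) : Submodule (ZMod p) (Matrix (Fin 2) (Fin 2) (ZMod p)) :=
  LinearMap.ker (Matrix.traceLinearMap (Fin 2) (ZMod p) (ZMod p))

/-- Conjugation `A ↦ g A g⁻¹` on the full matrix algebra, as a linear map. -/
noncomputable def conjFull (p : ℕ) (g : SpecialLinearGroup (Fin 2) (ZMod p)) :
    Matrix (Fin 2) (Fin 2) (ZMod p) →ₗ[ZMod p] Matrix (Fin 2) (Fin 2) (ZMod p) :=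
  (LinearMap.mulLeft (ZMod p) (g : Matrix (Fin 2) (Fin 2) (ZMod p))).comp
    (LinearMap.mulRight (ZMod p) ((g⁻¹ : SpecialLinearGroup (Fin 2) (ZMod p)) :
      Matrix (Fin 2) (Fin 2) (ZMod p)))

lemma conjFull_mem_sl2 (p : ℕ) (g : SpecialLinearGroup (Fin 2) (ZMod p))
    (A : Matrix (Fin 2) (Fin 2) (ZMod p)) (hA : A ∈ sl2 p) : conjFull p g A ∈ sl2 p := by
  simp only [sl2, LinearMap.mem_ker, Matrix.traceLinearMap] at hA ⊢
  simp only [conjFull, LinearMap.coe_comp, Function.comp_apply, LinearMap.mulLeft_apply,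
    LinearMap.mulRight_apply, LinearMap.coe_mk, AddHom.coe_mk] at hA ⊢
  rw [Matrix.trace_mul_comm, mul_assoc, ← Matrix.SpecialLinearGroup.coe_mul,
    inv_mul_cancel, Matrix.SpecialLinearGroup.coe_one, mul_one, hA]

/-- The conjugation representation of `SL₂(𝔽_p)` on `sl₂(𝔽_p)`. -/
noncomputable def sl2Rep (p : ℕ) :
    Representation (ZMod p) (SpecialLinearGroup (Fin 2) (ZMod p)) (sl2 p) where
  toFun g := (conjFull p g).restrict (fun A hA => conjFull_mem_sl2 p g A hA)
  map_one' := by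
    ext A
    simp [conjFull, LinearMap.restrict_apply]
  map_mul' g h := by
    ext A
    simp [conjFull, LinearMap.restrict_apply, _root_.mul_inv_rev, mul_assoc]

/-!
Let `t = diag(2, 1/2)`, let `u_x` be the upper unipotent matrices and `w` the Weyl element. Since
`t` has order prime to `p`, averaging over `⟨t⟩` lets us subtract a coboundary so that a given
cocycle `f` vanishes at `t`; then `f (u_{4x}) = f (t u_x t⁻¹) = t • f (u_x)`. For `p ≥ 7` the
weights `4, 1, 1/4` of `t` on `sl₂` are distinct, and the coordinates of `x ↦ f (u_x)` are
successively additive, so `f (u_x)` is `x` times a fixed upper-nilpotent matrix: the coboundary of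
a diagonal matrix, which `t` fixes. The remaining cocycle vanishes at `t` and on all `u_x`; the
relations `t w t = w` and `u_1 w u_1 = w u_{-1} w` force it to vanish at `w`, and these elements
generate `SL₂`.
-/

universe u

namespace Representation

variable {k G V : Type*} [CommRing k] [Group G] [AddCommGroup V] [Module k V]
  (ρ : Representation k G V)

def IsCocycle₁ (f : G → V) : Prop := ∀ g h, f (g * h) = ρ g (f h) + f g

def IsCoboundary₁ (f : G → V) : Prop := ∃ b, ∀ g, f g = ρ g b - b

variable {ρ} {f : G → V}

theorem IsCocycle₁.map_one (hf : ρ.IsCocycle₁ f) : f 1 = 0 := by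
  simpa using hf 1 1

theorem IsCocycle₁.sub_coboundary (hf : ρ.IsCocycle₁ f) (b : V) :
    ρ.IsCocycle₁ fun g => f g - (ρ g b - b) := by
  intro g h
  simp only [hf g h, map_mul, Module.End.mul_apply, map_sub]
  abel

theorem IsCoboundary₁.of_sub_coboundary {b : V}
    (h : ρ.IsCoboundary₁ fun g => f g - (ρ g b - b)) : ρ.IsCoboundary₁ f := by
  obtain ⟨c, hc⟩ := h
  refine ⟨b + c, fun g => ?_⟩
  rw [map_add, sub_eq_iff_eq_add.mp (hc g)]
  abel

theorem IsCocycle₁.apply_eq_of_mul_eq_mul (hf : ρ.IsCocycle₁ f) {t g g' : G} (ht : f t = 0)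
    (h : t * g = g' * t) : f g' = ρ t (f g) := by
  have := hf t g
  rwa [h, hf, ht, map_zero, zero_add, add_zero] at this

theorem IsCocycle₁.eq_zero_of_closure_eq_top (hf : ρ.IsCocycle₁ f) {S : Set G}
    (hS : Subgroup.closure S = ⊤) (hfS : ∀ s ∈ S, f s = 0) : f = 0 := by
  let K : Subgroup G :=
    { carrier := {g | f g = 0}
      one_mem' := hf.map_one
      mul_mem' := fun {g h} hg hh => by simp_all [hf g h]
      inv_mem' := fun {g} hg => by
        have h := hf g g⁻¹
        rw [mul_inv_cancel, hf.map_one, hg, add_zero] at h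
        simpa using congrArg (ρ g⁻¹) h.symm }
  have hK : K = ⊤ := top_le_iff.mp (hS ▸ (Subgroup.closure_le K).mpr hfS)
  funext g
  exact (hK ▸ Subgroup.mem_top g : g ∈ K)

theorem IsCocycle₁.exists_apply_eq_of_pow_eq_one (hf : ρ.IsCocycle₁ f) {t : G} {n : ℕ}
    (ht : t ^ n = 1) (hn : IsUnit (n : k)) : ∃ b, f t = ρ t b - b := by
  set S := ∑ i ∈ Finset.range n, f (t ^ i)
  have hshift : ∑ i ∈ Finset.range n, f (t ^ (i + 1)) = S := by
    have h := (Finset.sum_range_succ' (fun i => f (t ^ i)) n).symm.trans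
      (Finset.sum_range_succ _ n)
    rw [ht, pow_zero] at h
    exact add_right_cancel h
  have hS : ρ t S = S - n • f t := by
    calc ρ t S = ∑ i ∈ Finset.range n, (f (t ^ (i + 1)) - f t) := by
          simp only [S, map_sum, pow_succ', hf t, add_sub_cancel_right]
      _ = S - n • f t := by
          rw [Finset.sum_sub_distrib, hshift, Finset.sum_const, Finset.card_range]
  refine ⟨(↑hn.unit⁻¹ : k) • -S, ?_⟩
  rw [map_smul, map_neg, hS, ← smul_sub, neg_sub_neg, sub_sub_cancel,
    ← Nat.cast_smul_eq_nsmul k, smul_smul, hn.val_inv_mul, one_smul]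

theorem isZero_groupCohomology_one_of_forall_isCoboundary₁ {k G V : Type u}
    [CommRing k] [Group G] [AddCommGroup V] [Module k V] {ρ : Representation k G V}
    (h : ∀ f : G → V, ρ.IsCocycle₁ f → ρ.IsCoboundary₁ f) :
    CategoryTheory.Limits.IsZero (groupCohomology (Rep.of ρ) 1) := by
  have hzero (x : groupCohomology.H1 (Rep.of ρ)) : x = 0 := by
    induction x using groupCohomology.H1_induction_on with | h f => ?_
    obtain ⟨b, hb⟩ := h f ((groupCohomology.mem_cocycles₁_iff f).1 f.2)
    exact (groupCohomology.H1π_eq_zero_iff f).2 ⟨b, funext fun g => (hb g).symm⟩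
  have : Subsingleton (groupCohomology.H1 (Rep.of ρ)) :=
    ⟨fun a b => (hzero a).trans (hzero b).symm⟩
  exact ModuleCat.isZero_of_subsingleton _

end Representation

open scoped MatrixGroups

namespace SL2

section CommRing

variable {K : Type*} [CommRing K]

def upper (x : K) : SL(2, K) := ⟨!![1, x; 0, 1], by simp [det_fin_two_of]⟩

def lower (y : K) : SL(2, K) := ⟨!![1, 0; y, 1], by simp [det_fin_two_of]⟩

def weyl : SL(2, K) := ⟨!![0, 1; -1, 0], by simp [det_fin_two_of]⟩

def torus : Kˣ →* SL(2, K) where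
  toFun u := ⟨!![(u : K), 0; 0, ↑u⁻¹], by simp [det_fin_two_of]⟩
  map_one' := by ext i j; fin_cases i <;> fin_cases j <;> rfl
  map_mul' u v := by
    apply Subtype.ext
    change !![((u * v : Kˣ) : K), 0; 0, ↑(u * v)⁻¹] =
      !![(u : K), 0; 0, ↑u⁻¹] * !![(v : K), 0; 0, ↑v⁻¹]
    simp [mul_comm]

@[simp] theorem coe_upper (x : K) : (upper x : Matrix (Fin 2) (Fin 2) K) = !![1, x; 0, 1] := rfl

@[simp] theorem coe_lower (y : K) : (lower y : Matrix (Fin 2) (Fin 2) K) = !![1, 0; y, 1] := rfl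

@[simp] theorem coe_weyl : ((weyl : SL(2, K)) : Matrix (Fin 2) (Fin 2) K) = !![0, 1; -1, 0] :=
  rfl

@[simp] theorem coe_torus (u : Kˣ) :
    (torus u : Matrix (Fin 2) (Fin 2) K) = !![(u : K), 0; 0, ↑u⁻¹] := rfl

theorem upper_add (x y : K) : upper (x + y) = upper x * upper y := by
  ext i j; fin_cases i <;> fin_cases j <;> simp [add_comm]

theorem torus_mul_upper (u : Kˣ) (x : K) : torus u * upper x = upper (u ^ 2 * x) * torus u := by
  ext i j; fin_cases i <;> fin_cases j <;> simp
  linear_combination (-(u : K) * x) * u.mul_inv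

theorem torus_mul_weyl_mul_torus (u : Kˣ) : torus u * weyl * torus u = weyl := by
  ext i j; fin_cases i <;> fin_cases j <;> simp

theorem upper_one_mul_weyl_mul_upper_one :
    upper (1 : K) * weyl * upper 1 = weyl * upper (-1) * weyl := by
  ext i j; fin_cases i <;> fin_cases j <;> simp

theorem weyl_mul_upper_neg (y : K) : weyl * upper (-y) = lower y * weyl := by
  ext i j; fin_cases i <;> fin_cases j <;> simp

end CommRing

variable {K : Type*} [Field K]

theorem eq_upper_mul_lower_mul_upper (g : SL(2, K)) (hg : g 1 0 ≠ 0) :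
    g = upper ((g 0 0 - 1) / g 1 0) * lower (g 1 0) * upper ((g 1 1 - 1) / g 1 0) := by
  have hdet : g 0 0 * g 1 1 - g 0 1 * g 1 0 = 1 := by rw [← det_fin_two]; exact g.2
  ext i j; fin_cases i <;> fin_cases j <;> simp [Matrix.mul_apply] <;> field_simp
  · ring
  · linear_combination -hdet
  · ring

theorem closure_range_upper_union_weyl :
    Subgroup.closure (Set.range upper ∪ {weyl}) = (⊤ : Subgroup SL(2, K)) := by
  set H := Subgroup.closure (Set.range upper ∪ {weyl} : Set SL(2, K))
  have hu (x : K) : upper x ∈ H := Subgroup.subset_closure (Or.inl ⟨x, rfl⟩)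
  have hw : weyl ∈ H := Subgroup.subset_closure (Or.inr rfl)
  have hl (y : K) : lower y ∈ H := by
    rw [eq_mul_inv_of_mul_eq (weyl_mul_upper_neg y).symm]
    exact mul_mem (mul_mem hw (hu _)) (inv_mem hw)
  have hbig (g : SL(2, K)) (hg : g 1 0 ≠ 0) : g ∈ H := by
    rw [eq_upper_mul_lower_mul_upper g hg]
    exact mul_mem (mul_mem (hu _) (hl _)) (hu _)
  refine eq_top_iff.mpr fun g _ => ?_
  by_cases hg : g 1 0 = 0
  · have hg11 : g 1 1 ≠ 0 := fun h => by
      have hdet := g.2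
      rw [det_fin_two, hg, h] at hdet
      simp at hdet
    have hgw : (g * weyl : SL(2, K)) 1 0 ≠ 0 := by simpa [Matrix.mul_apply] using hg11
    simpa using mul_mem (hbig _ hgw) (inv_mem hw)
  · exact hbig g hg

end SL2

namespace sl2

open SL2

variable {p : ℕ}

def mk (a b c : ZMod p) : sl2 p := ⟨!![a, b; c, -a], by simp [sl2, trace_fin_two]⟩

@[simp] theorem coe_mk (a b c : ZMod p) :
    (mk a b c : Matrix (Fin 2) (Fin 2) (ZMod p)) = !![a, b; c, -a] := rfl

theorem mk_eq_mk_iff {a b c a' b' c' : ZMod p} :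
    mk a b c = mk a' b' c' ↔ a = a' ∧ b = b' ∧ c = c' := by
  refine ⟨fun h => ?_, fun ⟨ha, hb, hc⟩ => ha ▸ hb ▸ hc ▸ rfl⟩
  have h' := congrArg (fun A : sl2 p => ((A : Matrix (Fin 2) (Fin 2) (ZMod p)) 0 0,
    (A : Matrix (Fin 2) (Fin 2) (ZMod p)) 0 1, (A : Matrix (Fin 2) (Fin 2) (ZMod p)) 1 0)) h
  simpa using h'

theorem eq_mk (A : sl2 p) :
    A = mk ((A : Matrix (Fin 2) (Fin 2) (ZMod p)) 0 0) ((A : Matrix (Fin 2) (Fin 2) (ZMod p)) 0 1)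
      ((A : Matrix (Fin 2) (Fin 2) (ZMod p)) 1 0) := by
  have htr : (A : Matrix (Fin 2) (Fin 2) (ZMod p)).trace = 0 := A.2
  rw [trace_fin_two] at htr
  ext i j; fin_cases i <;> fin_cases j <;> simp [eq_neg_of_add_eq_zero_right htr]

@[simp] theorem mk_zero : mk (0 : ZMod p) 0 0 = 0 := by
  ext i j; fin_cases i <;> fin_cases j <;> simp

theorem mk_add (a b c a' b' c' : ZMod p) :
    mk a b c + mk a' b' c' = mk (a + a') (b + b') (c + c') := by
  ext i j; fin_cases i <;> fin_cases j <;> simp [add_comm]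

theorem mk_sub (a b c a' b' c' : ZMod p) :
    mk a b c - mk a' b' c' = mk (a - a') (b - b') (c - c') := by
  ext i j; fin_cases i <;> fin_cases j <;> simp; ring

theorem coe_sl2Rep_apply (g : SL(2, ZMod p)) (A : sl2 p) :
    ((sl2Rep p g A : sl2 p) : Matrix (Fin 2) (Fin 2) (ZMod p)) =
      (g : Matrix (Fin 2) (Fin 2) (ZMod p)) * ((A : Matrix (Fin 2) (Fin 2) (ZMod p)) *
        adjugate (g : Matrix (Fin 2) (Fin 2) (ZMod p))) := rfl

theorem sl2Rep_upper_mk (x a b c : ZMod p) :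
    sl2Rep p (upper x) (mk a b c) = mk (a + x * c) (b - 2 * x * a - x ^ 2 * c) c := by
  ext i j; fin_cases i <;> fin_cases j <;> simp [coe_sl2Rep_apply, adjugate_fin_two] <;> ring

theorem sl2Rep_torus_mk (u : (ZMod p)ˣ) (a b c : ZMod p) :
    sl2Rep p (torus u) (mk a b c) = mk a (u ^ 2 * b) (↑u⁻¹ ^ 2 * c) := by
  have hu : (u : ZMod p) * ↑u⁻¹ = 1 := u.mul_inv
  ext i j; fin_cases i <;> fin_cases j <;> simp [coe_sl2Rep_apply, adjugate_fin_two]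
  · linear_combination a * hu
  · ring
  · ring
  · linear_combination a * hu

theorem sl2Rep_weyl_mk (a b c : ZMod p) : sl2Rep p weyl (mk a b c) = mk (-a) (-c) (-b) := by
  ext i j; fin_cases i <;> fin_cases j <;> simp [coe_sl2Rep_apply, adjugate_fin_two]

end sl2

theorem ZMod.map_eq_mul_map_one {n : ℕ} {φ : ZMod n → ZMod n}
    (hφ : ∀ x y, φ (x + y) = φ x + φ y) (x : ZMod n) : φ x = x * φ 1 := by
  simpa using ZMod.map_smul (AddMonoidHom.mk' φ hφ) x 1

theorem ZMod.map_eq_zero_of_map_eq_mul {p : ℕ} [Fact p.Prime] {φ : ZMod p → ZMod p}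
    (hφ : ∀ x y, φ (x + y) = φ x + φ y) {s c : ZMod p} (hs : φ s = c * φ 1) (hsc : s ≠ c)
    (x : ZMod p) : φ x = 0 := by
  have h1 : (s - c) * φ 1 = 0 := by linear_combination hs - ZMod.map_eq_mul_map_one hφ s
  rw [ZMod.map_eq_mul_map_one hφ x, (mul_eq_zero.mp h1).resolve_left (sub_ne_zero.mpr hsc),
    mul_zero]

theorem ZMod.two_pow_four_ne_one {p : ℕ} (hp : p.Prime) (hp7 : 7 ≤ p) :
    (2 : ZMod p) ^ 4 ≠ 1 := by
  intro h
  have h15 : ((3 * 5 : ℕ) : ZMod p) = 0 := by push_cast; linear_combination h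
  rw [ZMod.natCast_eq_zero_iff] at h15
  rcases hp.dvd_mul.mp h15 with h | h <;> have := Nat.le_of_dvd (by norm_num) h <;> omega

section

open SL2 sl2

variable {p : ℕ}

theorem sl2Rep_cocycle_upper_eq_mk [Fact p.Prime] {f : SL(2, ZMod p) → sl2 p}
    (hf : (sl2Rep p).IsCocycle₁ f) {u : (ZMod p)ˣ} (hu : (u : ZMod p) ^ 4 ≠ 1)
    (ht : f (torus u) = 0) : ∃ β, ∀ x, f (upper x) = mk 0 (β * x) 0 := by
  set α : ZMod p → ZMod p := fun x => (f (upper x) : Matrix (Fin 2) (Fin 2) (ZMod p)) 0 0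
  set β : ZMod p → ZMod p := fun x => (f (upper x) : Matrix (Fin 2) (Fin 2) (ZMod p)) 0 1
  set γ : ZMod p → ZMod p := fun x => (f (upper x) : Matrix (Fin 2) (Fin 2) (ZMod p)) 1 0
  have hcoord (x : ZMod p) : f (upper x) = mk (α x) (β x) (γ x) := eq_mk _
  have hadd (x y : ZMod p) : α (x + y) = α x + α y + x * γ y ∧
      β (x + y) = β x + β y - 2 * x * α y - x ^ 2 * γ y ∧ γ (x + y) = γ x + γ y := by
    have h := hf (upper x) (upper y)
    rw [← upper_add, hcoord, hcoord, hcoord, sl2Rep_upper_mk, mk_add, mk_eq_mk_iff] at h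
    exact ⟨by linear_combination h.1, by linear_combination h.2.1, by linear_combination h.2.2⟩
  have hscale : α (u ^ 2) = α 1 ∧ β (u ^ 2) = u ^ 2 * β 1 ∧
      γ (u ^ 2) = ↑u⁻¹ ^ 2 * γ 1 := by
    have h := hf.apply_eq_of_mul_eq_mul ht (torus_mul_upper u 1)
    rwa [mul_one, hcoord, hcoord, sl2Rep_torus_mk, mk_eq_mk_iff] at h
  have huu : (u : ZMod p) * ↑u⁻¹ = 1 := u.mul_inv
  have hγ := ZMod.map_eq_zero_of_map_eq_mul (fun x y => (hadd x y).2.2) hscale.2.2 fun h =>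
    hu (by linear_combination (u : ZMod p) ^ 2 * h + (u * ↑u⁻¹ + 1) * huu)
  have hα := ZMod.map_eq_zero_of_map_eq_mul (fun x y => by simpa [hγ] using (hadd x y).1)
    (hscale.1.trans (one_mul _).symm) fun h =>
      hu (by linear_combination (u ^ 2 + 1 : ZMod p) * h)
  refine ⟨β 1, fun x => ?_⟩
  have hβ := ZMod.map_eq_mul_map_one (φ := β) fun x y => by simpa [hα, hγ] using (hadd x y).2.1
  rw [hcoord, hα, hγ, hβ, mul_comm]

theorem sl2Rep_cocycle_eq_zero [Fact p.Prime] {f : SL(2, ZMod p) → sl2 p}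
    (hf : (sl2Rep p).IsCocycle₁ f) {u : (ZMod p)ˣ} (hu : (u : ZMod p) ^ 2 ≠ 1)
    (ht : f (torus u) = 0) (hU : ∀ x, f (upper x) = 0) : f = 0 := by
  refine hf.eq_zero_of_closure_eq_top closure_range_upper_union_weyl ?_
  rintro _ (⟨x, rfl⟩ | rfl)
  · exact hU x
  set a := (f weyl : Matrix (Fin 2) (Fin 2) (ZMod p)) 0 0
  set b := (f weyl : Matrix (Fin 2) (Fin 2) (ZMod p)) 0 1
  set c := (f weyl : Matrix (Fin 2) (Fin 2) (ZMod p)) 1 0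
  have hw : f weyl = mk a b c := eq_mk _
  have hfix : sl2Rep p (torus u) (f weyl) = f weyl := by
    have h := congrArg f (torus_mul_weyl_mul_torus u)
    rwa [hf, hf, ht, map_zero, zero_add, add_zero] at h
  rw [hw, sl2Rep_torus_mk, mk_eq_mk_iff] at hfix
  have huu : (u : ZMod p) * ↑u⁻¹ = 1 := u.mul_inv
  have hb : b = 0 := by
    have h : ((u : ZMod p) ^ 2 - 1) * b = 0 := by linear_combination hfix.2.1
    exact (mul_eq_zero.mp h).resolve_left (sub_ne_zero.mpr hu)
  have hc : c = 0 := by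
    have h : ((u : ZMod p) ^ 2 - 1) * c = 0 := by
      linear_combination -(u : ZMod p) ^ 2 * hfix.2.2 + (u * ↑u⁻¹ + 1) * c * huu
    exact (mul_eq_zero.mp h).resolve_left (sub_ne_zero.mpr hu)
  have hrel := congrArg f (upper_one_mul_weyl_mul_upper_one (K := ZMod p))
  simp only [hf _ _, hU, map_zero, zero_add, add_zero, map_mul, Module.End.mul_apply, hw, hb, hc,
    sl2Rep_upper_mk, sl2Rep_weyl_mk, mk_add, mk_eq_mk_iff] at hrel
  rw [hw, hb, hc, show a = 0 by linear_combination hrel.1, mk_zero]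

theorem sl2Rep_isCoboundary₁ (hp : p.Prime) (hp7 : 7 ≤ p) {f : SL(2, ZMod p) → sl2 p}
    (hf : (sl2Rep p).IsCocycle₁ f) : (sl2Rep p).IsCoboundary₁ f := by
  have := Fact.mk hp
  have h16 := ZMod.two_pow_four_ne_one hp hp7
  have h2 : (2 : ZMod p) ≠ 0 := Ring.two_ne_zero (by rw [ZMod.ringChar_zmod_n]; omega)
  set u := Units.mk0 (2 : ZMod p) h2
  have hu : (u : ZMod p) ^ 2 ≠ 1 := fun h => h16 (by
    rw [show (4 : ℕ) = 2 * 2 from rfl, pow_mul, ← Units.val_mk0 h2, h, one_pow])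
  obtain ⟨b₁, hb₁⟩ := hf.exists_apply_eq_of_pow_eq_one (t := torus u) (n := p - 1)
    (by rw [← map_pow, ZMod.units_pow_card_sub_one_eq_one, map_one])
    (by rw [Nat.cast_sub hp.one_le, ZMod.natCast_self, zero_sub, Nat.cast_one]
        exact isUnit_one.neg)
  have hf₁ := hf.sub_coboundary b₁
  obtain ⟨β, hβ⟩ := sl2Rep_cocycle_upper_eq_mk hf₁ h16 (sub_eq_zero.mpr hb₁)
  refine Representation.IsCoboundary₁.of_sub_coboundary (b := b₁)
    (.of_sub_coboundary (b := mk (-β / 2) 0 0) ⟨0, fun g => ?_⟩)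
  rw [map_zero, sub_zero]
  refine congrFun (sl2Rep_cocycle_eq_zero (hf₁.sub_coboundary _) hu ?_ fun x => ?_) g
  · rw [hb₁, sl2Rep_torus_mk, mul_zero, mul_zero, sub_self, sub_self, sub_self]
  · simp only [hβ, sl2Rep_upper_mk, mk_sub, ← mk_zero, mk_eq_mk_iff]
    refine ⟨by ring, by field_simp; ring, by ring⟩

end

/-- For a prime `p ≥ 7`, the first group cohomology
`H¹(SL₂(𝔽_p), sl₂(𝔽_p))` of the conjugation representation vanishes. -/
theorem groupCohomology_one_sl2_isZero (p : ℕ) (hp : p.Prime) (hp7 : 7 ≤ p) :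
    CategoryTheory.Limits.IsZero (groupCohomology (Rep.of (sl2Rep p)) 1) :=
  Representation.isZero_groupCohomology_one_of_forall_isCoboundary₁ fun _ hf =>
    sl2Rep_isCoboundary₁ hp hp7 hf
end

section
/- Let K be a number field, p a rational prime, 𝔭 a prime of the ring of integers of K lying above p with associated valuation v, and k ≥ 2 an integer. Let α, β ∈ K be nonzero elements such that: (i) |σ(α)| = |σ(β)| = p^{(k−1)/2} for every field embedding σ : K → ℂ; (ii) α is a unit at 𝔭 (v(α) = 0); and (iii) αβ = ε p^{k−1} for some root of unity ε ∈ K. Let ψ ∈ K be a root of unity. Then for every integer s with 1 ≤ s ≤ k−1, the element (1 − p^{s−1} ψ^{−1} α^{−2})(1 − ψ α β p^{−s})(1 − ψ β² p^{−s}) of K is zero if and only if εψ = 1 and s = k−1. -/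
/-!
Clearing denominators, the three factors vanish iff `ψ α² = p ^ (s - 1)`,
`(ε ψ) p ^ (k - 1) = p ^ s` and `ψ β² = p ^ s` respectively. A root of unity has absolute value `1`
under any complex embedding and valuation `1` at `𝔭`, so such an equation `ζ x = p ^ n` determines
`n` from the size of `x`. Absolute values rule out the first equation (`|α|² = p ^ (k - 1)` but
`s - 1 < k - 1`) and turn the second into `s = k - 1` and `ε ψ = 1`. Absolute values cannot see the
third, but `𝔭`-adic valuations do: `α` is a `𝔭`-unit, so `v(β²) = v(p) ^ (2 (k - 1))`, whereas
`s < 2 (k - 1)`.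
-/

open NumberField

theorem Real.rpow_div_two_sq {x : ℝ} (hx : 0 ≤ x) (y : ℝ) : (x ^ (y / 2)) ^ 2 = x ^ y := by
  rw [← Real.rpow_mul_natCast hx]
  norm_num

theorem Valuation.map_eq_one_of_isOfFinOrder {R Γ₀ : Type*} [Ring R]
    [LinearOrderedCommGroupWithZero Γ₀] (w : Valuation R Γ₀) {ζ : R} (hζ : IsOfFinOrder ζ) :
    w ζ = 1 := by
  obtain ⟨n, hn, h⟩ := (w.toMonoidWithZeroHom.toMonoidHom.isOfFinOrder hζ).exists_pow_eq_one
  exact (pow_eq_one_iff_of_nonneg zero_le hn.ne').1 h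

section

variable {K : Type*} [DivisionRing K]

theorem one_sub_mul_inv_eq_zero_iff {a b : K} (hb : b ≠ 0) : 1 - a * b⁻¹ = 0 ↔ b = a := by
  rw [sub_eq_zero, ← div_eq_mul_inv, eq_comm, div_eq_one_iff_eq hb, eq_comm]

theorem eq_of_isOfFinOrder_mul_eq_zpow (σ : K →+* ℂ) {p : ℕ} (hp : 1 < p) {ζ x : K}
    (hζ : IsOfFinOrder ζ) {m n : ℤ} (hx : ‖σ x‖ = (p : ℝ) ^ m) (h : ζ * x = (p : K) ^ n) :
    m = n := by
  have hζ1 : ‖σ ζ‖ = 1 := (σ.toMonoidHom.isOfFinOrder hζ).norm_eq_one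
  have hnorm := congrArg (‖σ ·‖) h
  simp only [map_mul, norm_mul, hζ1, hx, one_mul, map_zpow₀, map_natCast, norm_zpow,
    Complex.norm_natCast] at hnorm
  exact zpow_right_injective₀ (by positivity) (Nat.one_lt_cast.2 hp).ne' hnorm

theorem isOfFinOrder_mul_zpow_eq_zpow_iff [CharZero K] (σ : K →+* ℂ) {p : ℕ} (hp : 1 < p)
    {ζ : K} (hζ : IsOfFinOrder ζ) {m n : ℤ} :
    ζ * (p : K) ^ m = (p : K) ^ n ↔ ζ = 1 ∧ m = n := by
  have hpK : (p : K) ≠ 0 := Nat.cast_ne_zero.2 (zero_lt_one.trans hp).ne'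
  refine ⟨fun h ↦ ?_, by rintro ⟨rfl, rfl⟩; exact one_mul _⟩
  obtain rfl : m = n :=
    eq_of_isOfFinOrder_mul_eq_zpow σ hp hζ (by simp : ‖σ ((p : K) ^ m)‖ = (p : ℝ) ^ m) h
  exact ⟨(mul_eq_right₀ (zpow_ne_zero m hpK)).1 h, rfl⟩

theorem Valuation.eq_of_isOfFinOrder_mul_eq_zpow {Γ₀ : Type*} [LinearOrderedCommGroupWithZero Γ₀]
    (w : Valuation K Γ₀) {π ζ x : K} (hπ0 : π ≠ 0) (hπ1 : w π < 1) (hζ : IsOfFinOrder ζ)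
    {m n : ℤ} (hx : w x = w π ^ m) (h : ζ * x = π ^ n) : m = n := by
  have hval := congrArg w h
  rw [map_mul, w.map_eq_one_of_isOfFinOrder hζ, one_mul, hx, map_zpow₀] at hval
  exact zpow_right_injective₀ (w.pos_iff.2 hπ0) hπ1.ne hval

theorem Valuation.map_eq_zpow_of_mul_eq {Γ₀ : Type*} [LinearOrderedCommGroupWithZero Γ₀]
    (w : Valuation K Γ₀) {α β ε π : K} (hα : w α = 1) (hε : IsOfFinOrder ε) {m : ℤ}
    (h : α * β = ε * π ^ m) : w β = w π ^ m := by
  simpa [hα, w.map_eq_one_of_isOfFinOrder hε] using congrArg w h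

end

theorem interpolation_factor_eq_zero_iff_general
    (K : Type*) [Field K] [NumberField K]
    (p : ℕ) (hp : p.Prime) (k : ℕ)
    (v : IsDedekindDomain.HeightOneSpectrum (NumberField.RingOfIntegers K))
    (hv : (p : NumberField.RingOfIntegers K) ∈ v.asIdeal)
    (α β : K) (hα0 : α ≠ 0)
    (habs : ∀ σ : K →+* ℂ, ‖σ α‖ = (p : ℝ) ^ (((k : ℝ) - 1) / 2) ∧
      ‖σ β‖ = (p : ℝ) ^ (((k : ℝ) - 1) / 2))
    (hαunit : v.valuation K α = 1)
    (ε : K) (hε : IsOfFinOrder ε) (hαβ : α * β = ε * (p : K) ^ (k - 1))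
    (ψ : K) (hψ : IsOfFinOrder ψ) :
    ∀ s : ℤ, 1 ≤ s → s ≤ (k : ℤ) - 1 →
      ((1 - (p : K) ^ (s - 1) * ψ⁻¹ * α⁻¹ ^ 2) * (1 - ψ * (α * β) * (p : K) ^ (-s)) *
          (1 - ψ * β ^ 2 * (p : K) ^ (-s)) = 0 ↔
        ε * ψ = 1 ∧ s = (k : ℤ) - 1) := by
  intro s hs1 hs2
  obtain ⟨σ⟩ : Nonempty (K →+* ℂ) := inferInstance
  have hpK : (p : K) ≠ 0 := Nat.cast_ne_zero.2 hp.ne_zero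
  have hαβ' : α * β = ε * (p : K) ^ ((k : ℤ) - 1) := by
    rw [hαβ, ← zpow_natCast, Nat.cast_sub (by omega), Nat.cast_one]
  have hα_sq : ‖σ (α ^ 2)‖ = (p : ℝ) ^ ((k : ℤ) - 1) := by
    rw [map_pow, norm_pow, (habs σ).1, Real.rpow_div_two_sq (Nat.cast_nonneg p),
      ← Real.rpow_intCast]
    norm_cast
  have hβ_sq : v.valuation K (β ^ 2) = v.valuation K (p : K) ^ (2 * ((k : ℤ) - 1)) := by
    rw [map_pow, (v.valuation K).map_eq_zpow_of_mul_eq hαunit hε hαβ', ← zpow_natCast,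
      ← zpow_mul, mul_comm, Nat.cast_ofNat]
  have hp_lt_one : v.valuation K (p : K) < 1 := by
    simpa using (v.valuation_lt_one_iff_mem (K := K) (p : 𝓞 K)).2 hv
  have hfactor₁ : 1 - (p : K) ^ (s - 1) * ψ⁻¹ * α⁻¹ ^ 2 ≠ 0 := by
    rw [mul_assoc, inv_pow, ← mul_inv, Ne,
      one_sub_mul_inv_eq_zero_iff (mul_ne_zero hψ.isUnit.ne_zero (pow_ne_zero 2 hα0))]
    intro h
    have := eq_of_isOfFinOrder_mul_eq_zpow σ hp.one_lt hψ hα_sq h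
    omega
  have hfactor₂ : 1 - ψ * (α * β) * (p : K) ^ (-s) = 0 ↔ ε * ψ = 1 ∧ s = (k : ℤ) - 1 := by
    rw [zpow_neg, one_sub_mul_inv_eq_zero_iff (zpow_ne_zero s hpK), hαβ', ← mul_assoc,
      mul_comm ψ ε, eq_comm, isOfFinOrder_mul_zpow_eq_zpow_iff σ hp.one_lt (hε.mul hψ),
      eq_comm (a := (k : ℤ) - 1)]
  have hfactor₃ : 1 - ψ * β ^ 2 * (p : K) ^ (-s) ≠ 0 := by
    rw [zpow_neg, Ne, one_sub_mul_inv_eq_zero_iff (zpow_ne_zero s hpK)]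
    intro h
    have := (v.valuation K).eq_of_isOfFinOrder_mul_eq_zpow hpK hp_lt_one hψ hβ_sq h.symm
    omega
  simp only [mul_eq_zero, hfactor₁, hfactor₂, hfactor₃, false_or, or_false]

/-- Vanishing criterion for the interpolation factor `𝓔_p(s, 1)` of the
`p`-adic symmetric square `L`-function in the range `1 ≤ s ≤ k − 1`: with `α, β` Weil
numbers of weight `k − 1` at `p`, `α` a unit at a prime `𝔭` above `p`, `αβ = ε p^{k−1}`
for a root of unity `ε`, and `ψ` a root of unity, the product
`(1 − p^{s−1}ψ⁻¹α⁻²)(1 − ψαβp^{−s})(1 − ψβ²p^{−s})` vanishes iff `εψ = 1` and `s = k − 1`. -/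
theorem interpolation_factor_eq_zero_iff
    (K : Type*) [Field K] [NumberField K]
    (p : ℕ) (hp : p.Prime) (k : ℕ) (hk : 2 ≤ k)
    (v : IsDedekindDomain.HeightOneSpectrum (NumberField.RingOfIntegers K))
    (hv : (p : NumberField.RingOfIntegers K) ∈ v.asIdeal)
    (α β : K) (hα0 : α ≠ 0) (hβ0 : β ≠ 0)
    (habs : ∀ σ : K →+* ℂ, ‖σ α‖ = (p : ℝ) ^ (((k : ℝ) - 1) / 2) ∧
      ‖σ β‖ = (p : ℝ) ^ (((k : ℝ) - 1) / 2))
    (hαunit : v.valuation K α = 1)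
    (ε : K) (hε : IsOfFinOrder ε) (hαβ : α * β = ε * (p : K) ^ (k - 1))
    (ψ : K) (hψ : IsOfFinOrder ψ) :
    ∀ s : ℤ, 1 ≤ s → s ≤ (k : ℤ) - 1 →
      ((1 - (p : K) ^ (s - 1) * ψ⁻¹ * α⁻¹ ^ 2) * (1 - ψ * (α * β) * (p : K) ^ (-s)) *
          (1 - ψ * β ^ 2 * (p : K) ^ (-s)) = 0 ↔
        ε * ψ = 1 ∧ s = (k : ℤ) - 1) :=
  interpolation_factor_eq_zero_iff_general K p hp k v hv α β hα0 habs hαunit ε hε hαβ ψ hψ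
end

section
/- Let K be a number field, p a rational prime, 𝔭 a prime of the ring of integers of K lying above p with associated valuation v, and k ≥ 2 an integer. Let α, β ∈ K be nonzero elements such that: (i) |σ(α)| = |σ(β)| = p^{(k−1)/2} for every field embedding σ : K → ℂ; (ii) α is a unit at 𝔭 (v(α) = 0); and (iii) αβ = ε p^{k−1} for some root of unity ε ∈ K. Let ψ ∈ K be a root of unity. Then for every integer s with k ≤ s ≤ 2k−2, the element (1 − p^{s−1} ψ^{−1} α^{−2})(1 − p^{s−1} ψ^{−1} α^{−1} β^{−1})(1 − ψ β² p^{−s}) of K is zero if and only if εψ = 1 and s = k. -/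
/-!
Each factor has the form `1 - x`. In the first, `x` is `p ^ (s - 1)` times a `𝔭`-adic unit, so
its `𝔭`-adic valuation is `< 1` as `s ≥ 2`. In the third, the Weil bound gives
`|σ x| = p ^ (k - 1 - s) < 1` under any complex embedding `σ`. In the middle one,
`αβ = ε p ^ (k - 1)` turns `x` into `(εψ)⁻¹ p ^ (s - k)`, and in characteristic zero a power of
`p` is a root of unity only when it is `1`.
-/

open NumberField

lemma Valuation.map_eq_one_of_isOfFinOrder_s10 {R Γ : Type*} [Ring R]
    [LinearOrderedCommGroupWithZero Γ] (v : Valuation R Γ) {x : R} (hx : IsOfFinOrder x) :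
    v x = 1 := by
  obtain ⟨n, hn, hxn⟩ := isOfFinOrder_iff_pow_eq_one.mp hx
  exact (pow_eq_one_iff_left hn.ne').mp (by rw [← map_pow, hxn, map_one])

lemma Valuation.zpow_mul_ne_one {K Γ : Type*} [DivisionRing K]
    [LinearOrderedCommGroupWithZero Γ] (v : Valuation K Γ) {π u : K} (hπ : v π < 1)
    (hu : v u = 1) {m : ℤ} (hm : 0 < m) : π ^ m * u ≠ 1 := by
  lift m to ℕ using hm.le
  intro h
  have hv := congrArg v h
  rw [map_mul, zpow_natCast, map_pow, hu, mul_one, map_one] at hv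
  exact (pow_lt_one₀ zero_le hπ (by omega)).ne hv

lemma natCast_zpow_eq_iff_of_isOfFinOrder {K : Type*} [DivisionRing K] [CharZero K] {p : ℕ}
    (hp : 1 < p) {ζ : K} (hζ : IsOfFinOrder ζ) {m : ℤ} :
    (p : K) ^ m = ζ ↔ m = 0 ∧ ζ = 1 := by
  refine ⟨fun h ↦ ?_, fun ⟨hm, hζ⟩ ↦ by rw [hm, hζ, zpow_zero]⟩
  obtain ⟨n, hn, hζn⟩ := isOfFinOrder_iff_pow_eq_one.mp hζ
  have hpow : (((p : ℚ) ^ (m * n) : ℚ) : K) = 1 := by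
    rw [Rat.cast_zpow, Rat.cast_natCast, zpow_mul, h, zpow_natCast, hζn]
  have hmn : m * n = 0 :=
    (zpow_eq_one_iff_right₀ (a := (p : ℚ)) (by positivity) (by exact_mod_cast hp.ne')).mp
      (by exact_mod_cast hpow)
  have hm : m = 0 := by simpa [hn.ne'] using hmn
  exact ⟨hm, by rw [← h, hm, zpow_zero]⟩

lemma norm_map_natCast_zpow {K : Type*} [DivisionRing K] (σ : K →+* ℂ) (p : ℕ) (m : ℤ) :
    ‖σ ((p : K) ^ m)‖ = (p : ℝ) ^ m := by
  rw [map_zpow₀, map_natCast, norm_zpow, Complex.norm_natCast]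

lemma mul_sq_mul_natCast_zpow_neg_ne_one {K : Type*} [Field K] (σ : K →+* ℂ) {p : ℕ}
    (hp : 1 < p) {ψ β : K} (hψ : IsOfFinOrder ψ) {j s : ℤ} (hβ : ‖σ β‖ ^ 2 = (p : ℝ) ^ j)
    (hjs : j < s) : ψ * β ^ 2 * (p : K) ^ (-s) ≠ 1 := by
  intro h
  have hψ1 : ‖σ ψ‖ = 1 := (σ.toMonoidHom.isOfFinOrder hψ).norm_eq_one
  have hnorm := congrArg (‖σ ·‖) h
  simp only [map_mul, norm_mul, map_pow, norm_pow, hψ1, hβ, norm_map_natCast_zpow, map_one,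
    norm_one, one_mul] at hnorm
  rw [← zpow_add₀ (by positivity),
    zpow_eq_one_iff_right₀ (by positivity) (by exact_mod_cast hp.ne')] at hnorm
  omega

lemma rpow_sub_one_div_two_sq {x : ℝ} (hx : 0 ≤ x) (k : ℕ) :
    (x ^ (((k : ℝ) - 1) / 2)) ^ 2 = x ^ ((k : ℤ) - 1) := by
  rw [← Real.rpow_natCast, ← Real.rpow_mul hx, ← Real.rpow_intCast]
  push_cast
  ring_nf

theorem interpolation_factor_prime_eq_zero_iff_general
    (K : Type*) [Field K] [NumberField K]
    (p : ℕ) (hp : p.Prime) (k : ℕ) (hk : 2 ≤ k)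
    (v : IsDedekindDomain.HeightOneSpectrum (NumberField.RingOfIntegers K))
    (hv : (p : NumberField.RingOfIntegers K) ∈ v.asIdeal)
    (α β : K)
    (habs : ∀ σ : K →+* ℂ, ‖σ α‖ = (p : ℝ) ^ (((k : ℝ) - 1) / 2) ∧
      ‖σ β‖ = (p : ℝ) ^ (((k : ℝ) - 1) / 2))
    (hαunit : v.valuation K α = 1)
    (ε : K) (hε : IsOfFinOrder ε) (hαβ : α * β = ε * (p : K) ^ (k - 1))
    (ψ : K) (hψ : IsOfFinOrder ψ) :
    ∀ s : ℤ, (k : ℤ) ≤ s → s ≤ 2 * (k : ℤ) - 2 →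
      ((1 - (p : K) ^ (s - 1) * ψ⁻¹ * α⁻¹ ^ 2) *
          (1 - (p : K) ^ (s - 1) * ψ⁻¹ * (α⁻¹ * β⁻¹)) *
          (1 - ψ * β ^ 2 * (p : K) ^ (-s)) = 0 ↔
        ε * ψ = 1 ∧ s = (k : ℤ)) := by
  intro s hks _
  obtain ⟨σ⟩ : Nonempty (K →+* ℂ) := inferInstance
  have hvp : v.valuation K p < 1 := by
    simpa using (v.valuation_lt_one_iff_mem (K := K) (p : 𝓞 K)).mpr hv
  have hfirst : (p : K) ^ (s - 1) * ψ⁻¹ * α⁻¹ ^ 2 ≠ 1 := by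
    rw [mul_assoc]
    refine (v.valuation K).zpow_mul_ne_one hvp ?_ (by omega)
    simp [hαunit, (v.valuation K).map_eq_one_of_isOfFinOrder_s10 hψ]
  have hβ : ‖σ β‖ ^ 2 = (p : ℝ) ^ ((k : ℤ) - 1) := by
    rw [(habs σ).2, rpow_sub_one_div_two_sq (Nat.cast_nonneg p)]
  have hthird : ψ * β ^ 2 * (p : K) ^ (-s) ≠ 1 :=
    mul_sq_mul_natCast_zpow_neg_ne_one σ hp.one_lt hψ hβ (by omega)
  have hmiddle : (p : K) ^ (s - 1) * ψ⁻¹ * (α⁻¹ * β⁻¹) = (ε * ψ)⁻¹ * (p : K) ^ (s - k) := by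
    have hpK : (p : K) ≠ 0 := Nat.cast_ne_zero.2 hp.ne_zero
    rw [← mul_inv, hαβ, ← zpow_natCast, Nat.cast_sub (by omega), Nat.cast_one,
      show s - k = (s - 1) - (k - 1) by ring, zpow_sub₀ hpK (s - 1) (k - 1)]
    ring
  rw [mul_eq_zero, mul_eq_zero, or_iff_right (sub_ne_zero.2 hfirst.symm),
    or_iff_left (sub_ne_zero.2 hthird.symm), sub_eq_zero, eq_comm, hmiddle,
    inv_mul_eq_one₀ (hε.mul hψ).isUnit.ne_zero, eq_comm,
    natCast_zpow_eq_iff_of_isOfFinOrder hp.one_lt (hε.mul hψ), sub_eq_zero, and_comm]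

/-- Vanishing criterion for the interpolation factor `𝓔′_p(s, 1)` of the
`p`-adic symmetric square `L`-function in the range `k ≤ s ≤ 2k − 2`: with `α, β` Weil
numbers of weight `k − 1` at `p`, `α` a unit at a prime `𝔭` above `p`, `αβ = ε p^{k−1}`
for a root of unity `ε`, and `ψ` a root of unity, the product
`(1 − p^{s−1}ψ⁻¹α⁻²)(1 − p^{s−1}ψ⁻¹α⁻¹β⁻¹)(1 − ψβ²p^{−s})` vanishes iff `εψ = 1` and
`s = k`. -/
theorem interpolation_factor_prime_eq_zero_iff
    (K : Type*) [Field K] [NumberField K]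
    (p : ℕ) (hp : p.Prime) (k : ℕ) (hk : 2 ≤ k)
    (v : IsDedekindDomain.HeightOneSpectrum (NumberField.RingOfIntegers K))
    (hv : (p : NumberField.RingOfIntegers K) ∈ v.asIdeal)
    (α β : K) (hα0 : α ≠ 0) (hβ0 : β ≠ 0)
    (habs : ∀ σ : K →+* ℂ, ‖σ α‖ = (p : ℝ) ^ (((k : ℝ) - 1) / 2) ∧
      ‖σ β‖ = (p : ℝ) ^ (((k : ℝ) - 1) / 2))
    (hαunit : v.valuation K α = 1)
    (ε : K) (hε : IsOfFinOrder ε) (hαβ : α * β = ε * (p : K) ^ (k - 1))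
    (ψ : K) (hψ : IsOfFinOrder ψ) :
    ∀ s : ℤ, (k : ℤ) ≤ s → s ≤ 2 * (k : ℤ) - 2 →
      ((1 - (p : K) ^ (s - 1) * ψ⁻¹ * α⁻¹ ^ 2) *
          (1 - (p : K) ^ (s - 1) * ψ⁻¹ * (α⁻¹ * β⁻¹)) *
          (1 - ψ * β ^ 2 * (p : K) ^ (-s)) = 0 ↔
        ε * ψ = 1 ∧ s = (k : ℤ)) :=
  interpolation_factor_prime_eq_zero_iff_general K p hp k hk v hv α β habs hαunit ε hε hαβ ψ hψ
end
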